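/- arXiv:1612.08930 — 2 statements merged into one kernel-verified Lean document; each statement's English description precedes it below -/
import Mathlib

section
/- Let (R_n)_{n≥0} be a cyclic urn process with m types started with one ball of type 0. For every n ≥ 0 and every k ∈ {0,…,m−1} with 2k ≠ m, E[u_k(R_n)] = Γ(n+1+ω^k)/(Γ(n+1)·Γ(1+ω^k)). If m is even, then E[u_{m/2}(R_n)] = 0 for every n ≥ 1. -/
/-!
Given `𝓕_n`, the ball drawn at step `n + 1` has type `j` with probability `E[R_{n,j}]/(n+1)`
once we know that the urn holds `n + 1` balls almost surely, so the mean vector satisfies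
`E[R_{n+1}] = E[R_n] + E[R_n] A / (n+1)` for the replacement matrix `A`. Since `u_k` is a left
eigenvector, `u_k(w A) = ω^k u_k(w)`, this gives `E[u_k(R_{n+1})] = (1 + ω^k/(n+1)) E[u_k(R_n)]`
and hence `E[u_k(R_n)] = ∏_{i<n} (1 + ω^k/(i+1))`. When `ω^k ≠ -1`, `1 + ω^k` is not a pole of `Γ`
and the product is the Gamma quotient by `Γ(s+1) = sΓ(s)`; when `ω^k = -1` its first factor is `0`.
-/

open MeasureTheory ProbabilityTheory Filter Complex Finset Topology

noncomputable section

/-- `ω = exp(2πi/m)`, the `m`-th elementary root of unity. -/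
def cw (m : ℕ) : ℂ := Complex.exp (2 * Real.pi * Complex.I / m)

/-- `λ_k = cos(2πk/m)`. -/
def lam (m k : ℕ) : ℝ := Real.cos (2 * Real.pi * k / m)

/-- `μ_k = sin(2πk/m)`. -/
def muim (m k : ℕ) : ℝ := Real.sin (2 * Real.pi * k / m)

/-- the eigenvector `v_k = (1/m)(1, ω^{-k}, …, ω^{-(m-1)k})`. -/
def vvec (m k : ℕ) : Fin m → ℂ :=
  fun t => (m : ℂ)⁻¹ * cw m ^ (-((k * (t : ℕ) : ℕ) : ℤ))

/-- the dual coefficient `u_k(w) = ∑_t ω^{kt} w_t`. -/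
def ucoef (m k : ℕ) (w : Fin m → ℝ) : ℂ :=
  ∑ t : Fin m, cw m ^ (k * (t : ℕ)) * (w t : ℂ)

/-- the replacement matrix `A` of the cyclic urn. -/
def repA (m : ℕ) : Matrix (Fin m) (Fin m) ℝ :=
  Matrix.of fun i j => if (j : ℕ) = ((i : ℕ) + 1) % m then 1 else 0

/-- the filtration `𝓕_n = σ(R_0, …, R_n)`. -/
def urnFilt {Ω : Type*} [MeasurableSpace Ω] (m : ℕ) (R : ℕ → Ω → Fin m → ℝ) (n : ℕ) :
    MeasurableSpace Ω :=
  ⨆ i ∈ Finset.range (n + 1), MeasurableSpace.comap (R i) inferInstance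

/-- A cyclic urn process with `m` types started with one ball of type `j0`. -/
structure IsCyclicUrn {Ω : Type*} [MeasurableSpace Ω] (μ : Measure Ω) (m : ℕ) (j0 : Fin m)
    (R : ℕ → Ω → Fin m → ℝ) : Prop where
  isProb : IsProbabilityMeasure μ
  meas : ∀ n, Measurable (R n)
  natVal : ∀ n ω i, ∃ z : ℕ, R n ω i = z
  init : ∀ ω, R 0 ω = fun i => if i = j0 then 1 else 0
  step : ∀ n, ∀ j : Fin m,
    μ[Set.indicator {ω | R (n + 1) ω =
        fun i => R n ω i + if (i : ℕ) = ((j : ℕ) + 1) % m then 1 else 0}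
      (fun _ => (1 : ℝ)) | urnFilt m R n]
      =ᵐ[μ] fun ω => R n ω j / (n + 1)

/-- componentwise expectation `E[X]` of a random vector. -/
def expVec {Ω : Type*} [MeasurableSpace Ω] (μ : Measure Ω) {m : ℕ}
    (X : Ω → Fin m → ℝ) : Fin m → ℝ := fun i => ∫ ω, X ω i ∂μ

/-- the martingale `M_{k,n} = (Γ(n+1)/Γ(n+1+ω^k)) u_k(R_n - E[R_n])`, with `M_{k,0} = 0`. -/
def Mart {Ω : Type*} [MeasurableSpace Ω] (μ : Measure Ω) (m k : ℕ)
    (R : ℕ → Ω → Fin m → ℝ) (n : ℕ) (ω : Ω) : ℂ :=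
  if n = 0 then 0
  else (Complex.Gamma ((n : ℂ) + 1) / Complex.Gamma ((n : ℂ) + 1 + cw m ^ k)) *
    ucoef m k (fun t => R n ω t - expVec μ (R n) t)

/-- `ν` is the centered Gaussian distribution `𝒩(0, S)` on `ℝ^d` (Cramér–Wold
characterization: every linear functional is one-dimensional centered Gaussian). -/
def IsCenteredGaussian {d : ℕ} (ν : Measure (Fin d → ℝ)) (S : Matrix (Fin d) (Fin d) ℝ) : Prop :=
  IsProbabilityMeasure ν ∧
  ∀ l : Fin d → ℝ,
    ν.map (fun x => ∑ i, l i * x i) =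
      gaussianReal 0 (Real.toNNReal (∑ i, ∑ j, l i * S i j * l j))

/-- convergence in distribution of the random vectors `X_n` to the law `ν`. -/
def TendstoInDist {Ω : Type*} [MeasurableSpace Ω] (μ : Measure Ω) {d : ℕ}
    (X : ℕ → Ω → Fin d → ℝ) (ν : Measure (Fin d → ℝ)) : Prop :=
  ∀ f : BoundedContinuousFunction (Fin d → ℝ) ℝ,
    Tendsto (fun n => ∫ ω, f (X n ω) ∂μ) atTop (𝓝 (∫ x, f x ∂ν))

lemma IsPrimitiveRoot.pow_ne_neg_one {ζ : ℂ} {m k : ℕ} (hζ : IsPrimitiveRoot ζ m) (hk : k < m)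
    (h2k : 2 * k ≠ m) : ζ ^ k ≠ -1 := by
  intro h
  obtain ⟨c, hc⟩ : m ∣ 2 * k := (hζ.pow_eq_one_iff_dvd _).mp (by rw [pow_mul', h]; norm_num)
  have hc2 : c < 2 := by nlinarith
  interval_cases c
  · obtain rfl : k = 0 := by omega
    norm_num at h
  · omega

lemma IsPrimitiveRoot.pow_div_two_eq_neg_one {ζ : ℂ} {m : ℕ} (hζ : IsPrimitiveRoot ζ m)
    (hm : m ≠ 0) (h2 : 2 ∣ m) : ζ ^ (m / 2) = -1 := by
  refine IsPrimitiveRoot.eq_neg_one_of_two_right ?_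
  simpa [Nat.div_div_self h2 hm] using hζ.pow_of_dvd (by omega) (Nat.div_dvd_of_dvd h2)

lemma one_add_ne_neg_natCast_of_norm_eq_one {z : ℂ} (hz : ‖z‖ = 1) (hz1 : z ≠ -1) (i : ℕ) :
    1 + z ≠ -i := by
  intro h
  have hzi : z = -((i : ℂ) + 1) := by linear_combination h
  have hnorm : ‖(i : ℂ) + 1‖ = (i : ℝ) + 1 := by exact_mod_cast Complex.norm_natCast (i + 1)
  rw [hzi, norm_neg, hnorm] at hz
  obtain rfl : i = 0 := by exact_mod_cast (by linarith : (i : ℝ) = 0)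
  exact hz1 (by simpa using hzi)

lemma Gamma_div_Gamma_mul_Gamma_eq_prod {z : ℂ} (hz : ∀ i : ℕ, 1 + z ≠ -i) (n : ℕ) :
    Complex.Gamma ((n : ℂ) + 1 + z) / (Complex.Gamma ((n : ℂ) + 1) * Complex.Gamma (1 + z)) =
      ∏ i ∈ range n, (1 + z / ((i : ℂ) + 1)) := by
  have hΓ : Complex.Gamma (1 + z) ≠ 0 := Complex.Gamma_ne_zero hz
  induction n with
  | zero => simp [hΓ]
  | succ n ih =>
    have hpole : (n : ℂ) + 1 + z ≠ 0 := fun h => hz n (by linear_combination h)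
    have hn : (n : ℂ) + 1 ≠ 0 := Nat.cast_add_one_ne_zero n
    have hΓn : Complex.Gamma ((n : ℂ) + 1) ≠ 0 := by
      rw [Complex.Gamma_nat_eq_factorial]; exact_mod_cast n.factorial_ne_zero
    rw [prod_range_succ, ← ih]
    push_cast
    rw [add_right_comm _ 1 z, Complex.Gamma_add_one _ hpole, Complex.Gamma_add_one _ hn]
    field_simp

section FinitePartition

variable {Ω ι : Type*} [MeasurableSpace Ω] {μ : Measure Ω} [Fintype ι] {A : ι → Set Ω}

lemma ae_exists_mem_of_sum_measureReal_eq_one [IsProbabilityMeasure μ]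
    (hA : ∀ j, MeasurableSet (A j)) (hdisj : Pairwise (Function.onFun Disjoint A))
    (hsum : ∑ j, μ.real (A j) = 1) : ∀ᵐ ω ∂μ, ∃ j, ω ∈ A j := by
  have hU : μ (⋃ j, A j) = μ Set.univ := by
    rw [measure_iUnion hdisj hA, tsum_fintype, measure_univ, ← ENNReal.toReal_eq_one_iff,
      ENNReal.toReal_sum fun j _ => measure_ne_top μ _]
    exact hsum
  filter_upwards [(ae_mem_iff_measure_eq (MeasurableSet.iUnion hA).nullMeasurableSet).mpr hU]
    with ω hω using Set.mem_iUnion.mp hω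

lemma integral_eq_sum_measureReal_smul_of_ae_exists_mem {E : Type*} [NormedAddCommGroup E]
    [NormedSpace ℝ E] [CompleteSpace E] [IsFiniteMeasure μ] (hA : ∀ j, MeasurableSet (A j))
    (hdisj : Pairwise (Function.onFun Disjoint A)) (hcover : ∀ᵐ ω ∂μ, ∃ j, ω ∈ A j) {f : Ω → E}
    {c : ι → E} (hf : ∀ j, ∀ ω ∈ A j, f ω = c j) :
    ∫ ω, f ω ∂μ = ∑ j, μ.real (A j) • c j := by
  have hae : f =ᵐ[μ] fun ω => ∑ j, (A j).indicator (fun _ => c j) ω := by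
    filter_upwards [hcover] with ω ⟨j, hj⟩
    rw [sum_eq_single j, Set.indicator_of_mem hj, hf j ω hj]
    · exact fun i _ hij => Set.indicator_of_notMem (Set.disjoint_left.mp (hdisj hij.symm) hj) _
    · simp
  rw [integral_congr_ae hae, integral_finsetSum _ fun j _ => (integrable_const _).indicator (hA j)]
  exact sum_congr rfl fun j _ => integral_indicator_const _ (hA j)

end FinitePartition

lemma isPrimitiveRoot_cw {m : ℕ} (hm : m ≠ 0) : IsPrimitiveRoot (cw m) m :=
  Complex.isPrimitiveRoot_exp m hm

section Eigenvector

open Matrix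

variable {m : ℕ}

def ucoefLinearMap (m k : ℕ) : (Fin m → ℝ) →ₗ[ℝ] ℂ where
  toFun := ucoef m k
  map_add' v w := by simp [ucoef, mul_add, sum_add_distrib]
  map_smul' c w := by
    simp only [ucoef, Pi.smul_apply, smul_eq_mul, Complex.ofReal_mul, RingHom.id_apply,
      Complex.real_smul, mul_sum]
    exact sum_congr rfl fun t _ => by ring

@[simp]
lemma ucoefLinearMap_apply (k : ℕ) (w : Fin m → ℝ) : ucoefLinearMap m k w = ucoef m k w := rfl

lemma ucoef_single (k : ℕ) (c : Fin m) (x : ℝ) :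
    ucoef m k (Pi.single c x) = cw m ^ (k * (c : ℕ)) * x := by
  simp [ucoef, Pi.single_apply, apply_ite (fun y : ℝ => (y : ℂ))]

lemma repA_row (j : Fin m) : repA m j = Pi.single ⟨((j : ℕ) + 1) % m, Nat.mod_lt _ j.pos⟩ 1 := by
  ext i
  simp [repA, Pi.single_apply, Fin.ext_iff]

lemma repA_injective : Function.Injective (repA m) := by
  intro j j' h
  rw [repA_row, repA_row] at h
  have hnext := congrFun h ⟨((j : ℕ) + 1) % m, Nat.mod_lt _ j.pos⟩
  simp only [Pi.single_eq_same, Pi.single_apply, Fin.ext_iff] at hnext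
  split_ifs at hnext with hjj
  · have hmod : (j : ℕ) ≡ j' [MOD m] := Nat.ModEq.add_right_cancel' 1 hjj
    exact Fin.ext (Nat.ModEq.eq_of_lt_of_lt hmod j.isLt j'.isLt)
  · norm_num at hnext

lemma sum_repA_row (j : Fin m) : ∑ i, repA m j i = 1 := by
  simp [repA_row]

lemma ucoef_vecMul_repA (k : ℕ) (w : Fin m → ℝ) :
    ucoef m k (w ᵥ* repA m) = cw m ^ k * ucoef m k w := by
  rw [← ucoefLinearMap_apply, Matrix.vecMul_eq_sum, map_sum, ucoef, mul_sum]
  refine sum_congr rfl fun j _ => ?_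
  have hω : (cw m ^ k) ^ m = 1 := by
    rw [← pow_mul, mul_comm, pow_mul, (isPrimitiveRoot_cw j.pos.ne').pow_eq_one, one_pow]
  rw [map_smul, ucoefLinearMap_apply, repA_row, ucoef_single, pow_mul, ← pow_eq_pow_mod _ hω,
    Complex.real_smul, pow_succ, ← pow_mul, Complex.ofReal_one]
  ring

end Eigenvector

section CyclicUrn

open Matrix

variable {Ω : Type*} {m : ℕ} {R : ℕ → Ω → Fin m → ℝ}

-- Definitionally the event of `IsCyclicUrn.step`: row `j` of `repA m` is the unit vector of
-- type `j + 1 mod m`.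
def drawEvent (m : ℕ) (R : ℕ → Ω → Fin m → ℝ) (n : ℕ) (j : Fin m) : Set Ω :=
  {ω | R (n + 1) ω = R n ω + repA m j}

lemma pairwise_disjoint_drawEvent (n : ℕ) :
    Pairwise (Function.onFun Disjoint (drawEvent m R n)) := fun _ _ hjj =>
  Set.disjoint_left.mpr fun _ hj hj' => hjj (repA_injective (add_left_cancel (hj.symm.trans hj')))

variable [MeasurableSpace Ω] {μ : Measure Ω} {j0 : Fin m}

namespace IsCyclicUrn

lemma measurable_apply (hR : IsCyclicUrn μ m j0 R) (n : ℕ) (i : Fin m) :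
    Measurable fun ω => R n ω i :=
  (measurable_pi_apply i).comp (hR.meas n)

lemma measurableSet_drawEvent (hR : IsCyclicUrn μ m j0 R) (n : ℕ) (j : Fin m) :
    MeasurableSet (drawEvent m R n j) :=
  measurableSet_eq_fun (hR.meas (n + 1)) ((hR.meas n).add_const _)

lemma measureReal_drawEvent (hR : IsCyclicUrn μ m j0 R) (n : ℕ) (j : Fin m) :
    μ.real (drawEvent m R n j) = (∫ ω, R n ω j ∂μ) / (n + 1) := by
  have := hR.isProb
  have hle : urnFilt m R n ≤ ‹MeasurableSpace Ω› := iSup₂_le fun i _ => (hR.meas i).comap_le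
  calc μ.real (drawEvent m R n j)
      = ∫ ω, (drawEvent m R n j).indicator (fun _ => (1 : ℝ)) ω ∂μ :=
        (integral_indicator_one (hR.measurableSet_drawEvent n j)).symm
    _ = ∫ ω, (μ[(drawEvent m R n j).indicator (fun _ => (1 : ℝ)) | urnFilt m R n]) ω ∂μ :=
        (integral_condExp hle).symm
    _ = ∫ ω, R n ω j / (n + 1) ∂μ := integral_congr_ae (hR.step n j)
    _ = (∫ ω, R n ω j ∂μ) / (n + 1) := integral_div _ _

lemma integrable_apply_of_ae_sum (hR : IsCyclicUrn μ m j0 R) {n : ℕ}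
    (hsum : ∀ᵐ ω ∂μ, ∑ i, R n ω i = n + 1) (j : Fin m) : Integrable (fun ω => R n ω j) μ := by
  have := hR.isProb
  have hnonneg : ∀ ω i, 0 ≤ R n ω i := fun ω i => by
    obtain ⟨z, hz⟩ := hR.natVal n ω i
    exact hz ▸ z.cast_nonneg
  refine Integrable.mono' (integrable_const ((n : ℝ) + 1))
    (hR.measurable_apply n j).aestronglyMeasurable ?_
  filter_upwards [hsum] with ω hω
  rw [Real.norm_of_nonneg (hnonneg ω j), ← hω]
  exact single_le_sum (fun i _ => hnonneg ω i) (mem_univ j)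

lemma ae_exists_drawEvent_of_ae_sum (hR : IsCyclicUrn μ m j0 R) {n : ℕ}
    (hsum : ∀ᵐ ω ∂μ, ∑ i, R n ω i = n + 1) : ∀ᵐ ω ∂μ, ∃ j, ω ∈ drawEvent m R n j := by
  have := hR.isProb
  refine ae_exists_mem_of_sum_measureReal_eq_one (hR.measurableSet_drawEvent n)
    (pairwise_disjoint_drawEvent n) ?_
  simp_rw [hR.measureReal_drawEvent]
  rw [← sum_div, ← integral_finsetSum _ fun j _ => hR.integrable_apply_of_ae_sum hsum j,
    integral_congr_ae hsum, integral_const, probReal_univ, one_smul, div_self (by positivity)]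

lemma ae_sum_eq (hR : IsCyclicUrn μ m j0 R) (n : ℕ) : ∀ᵐ ω ∂μ, ∑ i, R n ω i = n + 1 := by
  induction n with
  | zero => exact ae_of_all _ fun ω => by simp [hR.init ω]
  | succ n ih =>
    filter_upwards [hR.ae_exists_drawEvent_of_ae_sum ih, ih] with ω ⟨j, hj⟩ hω
    rw [show R (n + 1) ω = R n ω + repA m j from hj]
    simp only [Pi.add_apply, sum_add_distrib, hω, sum_repA_row]
    push_cast
    ring

lemma integrable_apply (hR : IsCyclicUrn μ m j0 R) (n : ℕ) (j : Fin m) :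
    Integrable (fun ω => R n ω j) μ :=
  hR.integrable_apply_of_ae_sum (hR.ae_sum_eq n) j

lemma expVec_zero (hR : IsCyclicUrn μ m j0 R) : expVec μ (R 0) = Pi.single j0 1 := by
  have := hR.isProb
  ext i
  simp [expVec, hR.init, Pi.single_apply]

lemma expVec_succ (hR : IsCyclicUrn μ m j0 R) (n : ℕ) :
    expVec μ (R (n + 1)) = expVec μ (R n) + ((n : ℝ) + 1)⁻¹ • (expVec μ (R n) ᵥ* repA m) := by
  have := hR.isProb
  ext i
  have hincr : ∫ ω, (R (n + 1) ω i - R n ω i) ∂μ =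
      ∑ j, μ.real (drawEvent m R n j) • repA m j i :=
    integral_eq_sum_measureReal_smul_of_ae_exists_mem (hR.measurableSet_drawEvent n)
      (pairwise_disjoint_drawEvent n) (hR.ae_exists_drawEvent_of_ae_sum (hR.ae_sum_eq n))
      fun j ω hω => by rw [show R (n + 1) ω = R n ω + repA m j from hω]; simp
  rw [integral_sub (hR.integrable_apply _ i) (hR.integrable_apply n i), sub_eq_iff_eq_add'] at hincr
  simp_rw [hR.measureReal_drawEvent] at hincr
  simp only [expVec, hincr, Pi.add_apply, Pi.smul_apply, vecMul, dotProduct, smul_eq_mul, mul_sum]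
  exact congrArg _ (sum_congr rfl fun j _ => by ring)

lemma integral_ucoef (hR : IsCyclicUrn μ m j0 R) (k n : ℕ) :
    ∫ ω, ucoef m k (R n ω) ∂μ = ucoef m k (expVec μ (R n)) := by
  simp only [ucoef, expVec]
  rw [integral_finsetSum _ fun t _ => (hR.integrable_apply n t).ofReal.const_mul _]
  exact sum_congr rfl fun t _ => by rw [integral_const_mul, integral_complex_ofReal]

lemma integral_ucoef_eq_prod (hR : IsCyclicUrn μ m j0 R) (k n : ℕ) :
    ∫ ω, ucoef m k (R n ω) ∂μ =
      cw m ^ (k * (j0 : ℕ)) * ∏ i ∈ range n, (1 + cw m ^ k / ((i : ℂ) + 1)) := by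
  rw [hR.integral_ucoef]
  induction n with
  | zero => simp [hR.expVec_zero, ucoef_single]
  | succ n ih =>
    rw [hR.expVec_succ, ← ucoefLinearMap_apply, map_add, map_smul, ucoefLinearMap_apply,
      ucoefLinearMap_apply, ucoef_vecMul_repA, ih, prod_range_succ, Complex.real_smul]
    push_cast
    ring

end IsCyclicUrn

end CyclicUrn

theorem stmt5 {Ω : Type*} [MeasurableSpace Ω] (μ : Measure Ω) (m : ℕ) (hm : 2 ≤ m)
    (R : ℕ → Ω → Fin m → ℝ) (hR : IsCyclicUrn μ m ⟨0, by omega⟩ R) :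
    (∀ n : ℕ, ∀ k : ℕ, k < m → 2 * k ≠ m →
      ∫ ω, ucoef m k (R n ω) ∂μ =
        Complex.Gamma ((n : ℂ) + 1 + cw m ^ k) /
          (Complex.Gamma ((n : ℂ) + 1) * Complex.Gamma (1 + cw m ^ k))) ∧
    (2 ∣ m → ∀ n : ℕ, 1 ≤ n → ∫ ω, ucoef m (m / 2) (R n ω) ∂μ = 0) := by
  have hω := isPrimitiveRoot_cw (m := m) (by omega)
  refine ⟨fun n k hk h2k => ?_, fun h2 n hn => ?_⟩
  · have hnorm : ‖cw m ^ k‖ = 1 := by rw [norm_pow, hω.norm'_eq_one (by omega), one_pow]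
    rw [hR.integral_ucoef_eq_prod, Gamma_div_Gamma_mul_Gamma_eq_prod
      (one_add_ne_neg_natCast_of_norm_eq_one hnorm (hω.pow_ne_neg_one hk h2k))]
    simp
  · rw [hR.integral_ucoef_eq_prod, hω.pow_div_two_eq_neg_one (by omega) h2,
      prod_eq_zero (mem_range.mpr hn) (by norm_num), mul_zero]

end
end

section
/- Let m ≥ 2 be divisible by 3 and let (R_n)_{n≥0} be a cyclic urn process with m types started with one ball of type 0. Then for every n ≥ 1, E[|u_{m/3}(R_n)|²] = (n+1)/2. -/
/-!
Write `ζ = ω^k` and `X_n = u_k(R_n)`. If the ball added at step `n + 1` has type `j + 1`, which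
given `𝓕_n` happens with probability `R_{n,j}/(n+1)`, then `X_{n+1} = X_n + ζ^{j+1}`. Averaging
`|X_n + ζ^{j+1}|²` with these weights and using `∑_j R_{n,j} ζ^{j+1} = ζ X_n` and
`∑_j R_{n,j} = n + 1` gives `E|X_{n+1}|² = (1 + 2 Re ζ / (n+1)) E|X_n|² + 1`. For `k = m/3`,
`ζ` is a primitive cube root of unity, so `Re ζ = -1/2`, and from `E|X_0|² = 1` the recursion yields
`E|X_n|² = (n+1)/2` for `n ≥ 1`.
-/

open MeasureTheory ProbabilityTheory Filter Complex Finset Topology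

noncomputable section

lemma norm_cw (m : ℕ) : ‖cw m‖ = 1 := by
  rw [cw, show (2 * Real.pi * Complex.I / m : ℂ) = ((2 * Real.pi / m : ℝ) : ℂ) * Complex.I by
    push_cast; ring, Complex.norm_exp_ofReal_mul_I]

lemma cw_pow_self {m : ℕ} (hm : m ≠ 0) : cw m ^ m = 1 :=
  (Complex.isPrimitiveRoot_exp m hm).pow_eq_one

lemma re_cw_pow_div_three {m : ℕ} (hm : m ≠ 0) (hme : 3 ∣ m) :
    (cw m ^ (m / 3)).re = -(1 / 2) := by
  obtain ⟨c, rfl⟩ := hme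
  have hc : (c : ℂ) ≠ 0 := by exact_mod_cast (by omega : c ≠ 0)
  rw [Nat.mul_div_cancel_left c three_pos, cw, ← Complex.exp_nat_mul,
    show (c : ℂ) * (2 * Real.pi * Complex.I / (3 * c : ℕ)) =
      ((2 * Real.pi / 3 : ℝ) : ℂ) * Complex.I by push_cast; field_simp,
    Complex.exp_ofReal_mul_I_re, show 2 * Real.pi / 3 = Real.pi - Real.pi / 3 by ring,
    Real.cos_pi_sub, Real.cos_pi_div_three]

def eSucc (m : ℕ) (j : Fin m) : Fin m → ℝ :=
  fun i => if (i : ℕ) = ((j : ℕ) + 1) % m then 1 else 0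

lemma eSucc_injective {m : ℕ} : Function.Injective (eSucc m) := by
  intro j j' h
  have hj : ((j : ℕ) + 1) % m < m := Nat.mod_lt _ j.pos
  have hmod : (j : ℕ) + 1 ≡ (j' : ℕ) + 1 [MOD m] := by
    simpa [eSucc, Nat.ModEq] using congrFun h ⟨_, hj⟩
  exact Fin.ext ((Nat.ModEq.add_right_cancel' 1 hmod).eq_of_lt_of_lt j.isLt j'.isLt)

lemma sum_eSucc {m : ℕ} (j : Fin m) : ∑ i, eSucc m j i = 1 := by
  have hj : ((j : ℕ) + 1) % m < m := Nat.mod_lt _ j.pos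
  simp [eSucc, ← Fin.ext_iff (b := ⟨_, hj⟩)]

section Ucoef

variable {m : ℕ} (k : ℕ)

lemma continuous_ucoef : Continuous (ucoef m k) := by
  unfold ucoef; fun_prop

lemma ucoef_eq_sum_pow (w : Fin m → ℝ) :
    ucoef m k w = ∑ t : Fin m, (w t : ℂ) * (cw m ^ k) ^ (t : ℕ) :=
  Finset.sum_congr rfl fun t _ => by rw [pow_mul, mul_comm]

lemma ucoef_add (w v : Fin m → ℝ) : ucoef m k (w + v) = ucoef m k w + ucoef m k v := by
  simp only [ucoef, Pi.add_apply, Complex.ofReal_add, mul_add, Finset.sum_add_distrib]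

lemma norm_ucoef_le (w : Fin m → ℝ) : ‖ucoef m k w‖ ≤ ∑ t, |w t| :=
  (norm_sum_le _ _).trans_eq (Finset.sum_congr rfl fun t _ => by simp [norm_cw])

lemma ucoef_indicator (j0 : Fin m) :
    ucoef m k (fun i => if i = j0 then 1 else 0) = cw m ^ (k * j0) := by
  simp [ucoef, apply_ite ((↑) : ℝ → ℂ)]

lemma ucoef_eSucc (j : Fin m) : ucoef m k (eSucc m j) = (cw m ^ k) ^ ((j : ℕ) + 1) := by
  have hpow : (cw m ^ k) ^ m = 1 := by
    rw [← pow_mul, mul_comm, pow_mul, cw_pow_self j.pos.ne', one_pow]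
  have hj : ((j : ℕ) + 1) % m < m := Nat.mod_lt _ j.pos
  rw [ucoef_eq_sum_pow, pow_eq_pow_mod _ hpow]
  simp [eSucc, ← Fin.ext_iff (b := ⟨_, hj⟩), apply_ite ((↑) : ℝ → ℂ)]

lemma sum_mul_norm_sq_ucoef_add_eSucc (w : Fin m → ℝ) :
    ∑ j, w j * ‖ucoef m k (w + eSucc m j)‖ ^ 2 =
      (∑ j, w j) * (‖ucoef m k w‖ ^ 2 + 1) + 2 * (cw m ^ k).re * ‖ucoef m k w‖ ^ 2 := by
  set ζ := cw m ^ k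
  set X := ucoef m k w
  have hζ : ∀ p : ℕ, ‖ζ ^ p‖ = 1 := fun p => by simp [ζ, norm_cw]
  have hshift : ∑ j, (w j : ℂ) * ζ ^ ((j : ℕ) + 1) = ζ * X := by
    rw [show X = _ from ucoef_eq_sum_pow k w, Finset.mul_sum]
    exact Finset.sum_congr rfl fun j _ => by ring
  have hcross :
      ∑ j, w j * (X * (starRingEnd ℂ) (ζ ^ ((j : ℕ) + 1))).re = ζ.re * ‖X‖ ^ 2 := by
    have : ∑ j, (w j : ℂ) * (X * (starRingEnd ℂ) (ζ ^ ((j : ℕ) + 1))) =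
        X * (starRingEnd ℂ) (ζ * X) := by
      rw [← hshift, map_sum, Finset.mul_sum]
      exact Finset.sum_congr rfl fun j _ => by
        simp only [map_mul, Complex.conj_ofReal]; ring
    have hre := congrArg Complex.re this
    rw [Complex.re_sum] at hre
    simp only [Complex.re_ofReal_mul] at hre
    rw [hre, map_mul, mul_left_comm, Complex.mul_conj, Complex.normSq_eq_norm_sq,
      Complex.re_mul_ofReal, Complex.conj_re]
  have hterm : ∀ j : Fin m, ‖X + ζ ^ ((j : ℕ) + 1)‖ ^ 2 =
      ‖X‖ ^ 2 + 1 + 2 * (X * (starRingEnd ℂ) (ζ ^ ((j : ℕ) + 1))).re := fun j => by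
    rw [Complex.sq_norm, Complex.sq_norm, Complex.normSq_add, ← Complex.sq_norm (ζ ^ _), hζ,
      one_pow]
  simp_rw [ucoef_add, ucoef_eSucc]
  calc ∑ j, w j * ‖X + ζ ^ ((j : ℕ) + 1)‖ ^ 2
      = ∑ j, (w j * (‖X‖ ^ 2 + 1) +
          2 * (w j * (X * (starRingEnd ℂ) (ζ ^ ((j : ℕ) + 1))).re)) :=
        Finset.sum_congr rfl fun j _ => by rw [hterm]; ring
    _ = _ := by rw [Finset.sum_add_distrib, ← Finset.sum_mul, ← Finset.mul_sum, hcross]; ring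

end Ucoef

section Urn

variable {Ω : Type*} [MeasurableSpace Ω] {μ : Measure Ω} {m : ℕ} {j0 : Fin m}
  {R : ℕ → Ω → Fin m → ℝ}

def stepSet (R : ℕ → Ω → Fin m → ℝ) (n : ℕ) (j : Fin m) : Set Ω :=
  {ω | R (n + 1) ω = R n ω + eSucc m j}

lemma measurableSet_stepSet (hR : ∀ i, Measurable (R i)) (n : ℕ) (j : Fin m) :
    MeasurableSet (stepSet R n j) :=
  measurableSet_eq_fun (hR (n + 1)) ((hR n).add_const _)

omit [MeasurableSpace Ω] in
lemma pairwise_disjoint_stepSet (n : ℕ) : Pairwise (Function.onFun Disjoint (stepSet R n)) :=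
  fun _ _ hne => Set.disjoint_left.2 fun _ h h' =>
    hne (eSucc_injective (add_left_cancel (h.symm.trans h')))

lemma urnFilt_le (hR : ∀ i, Measurable (R i)) (n : ℕ) :
    urnFilt m R n ≤ ‹MeasurableSpace Ω› :=
  iSup₂_le fun i _ => (hR i).comap_le

lemma measurable_urnFilt (n : ℕ) : Measurable[urnFilt m R n] (R n) :=
  measurable_iff_comap_le.2 <| le_biSup (fun i => MeasurableSpace.comap (R i) inferInstance)
    (Finset.self_mem_range_succ n)

lemma IsCyclicUrn.condExp_indicator_stepSet (hR : IsCyclicUrn μ m j0 R) {n : ℕ} {j : Fin m}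
    {h : Ω → ℝ} (hmeas : StronglyMeasurable[urnFilt m R n] h) (hint : Integrable h μ) :
    μ[(stepSet R n j).indicator h | urnFilt m R n] =ᵐ[μ]
      fun ω => h ω * (R n ω j / (n + 1)) := by
  have := hR.isProb
  have hS := measurableSet_stepSet hR.meas n j
  have hmul : (stepSet R n j).indicator h = h * (stepSet R n j).indicator 1 := by
    ext ω; by_cases hω : ω ∈ stepSet R n j <;> simp [hω]
  rw [hmul]
  filter_upwards [condExp_mul_of_stronglyMeasurable_left hmeas (hmul ▸ hint.indicator hS)
    ((integrable_const 1).indicator hS), hR.step n j] with ω h1 h2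
  exact h1.trans (congrArg (h ω * ·) h2)

lemma IsCyclicUrn.integral_indicator_stepSet (hR : IsCyclicUrn μ m j0 R) {n : ℕ} {j : Fin m}
    {h : Ω → ℝ} (hmeas : StronglyMeasurable[urnFilt m R n] h) (hint : Integrable h μ) :
    ∫ ω, (stepSet R n j).indicator h ω ∂μ = ∫ ω, h ω * (R n ω j / (n + 1)) ∂μ := by
  have := hR.isProb
  rw [← integral_condExp (urnFilt_le hR.meas n)]
  exact integral_congr_ae (hR.condExp_indicator_stepSet hmeas hint)

lemma IsCyclicUrn.integrable_mul_div (hR : IsCyclicUrn μ m j0 R) {n : ℕ} {j : Fin m}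
    {h : Ω → ℝ} (hmeas : StronglyMeasurable[urnFilt m R n] h) (hint : Integrable h μ) :
    Integrable (fun ω => h ω * (R n ω j / (n + 1))) μ :=
  integrable_condExp.congr (hR.condExp_indicator_stepSet hmeas hint)

lemma IsCyclicUrn.ae_exists_mem_stepSet_of_ae_sum (hR : IsCyclicUrn μ m j0 R) {n : ℕ}
    (hsum : ∀ᵐ ω ∂μ, ∑ i, R n ω i = n + 1) :
    ∀ᵐ ω ∂μ, ∃ j, ω ∈ stepSet R n j := by
  have := hR.isProb
  have hS := measurableSet_stepSet hR.meas n
  have hprob : ∀ j, μ.real (stepSet R n j) = ∫ ω, R n ω j / (n + 1) ∂μ := fun j => by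
    simpa [integral_indicator_one (hS j)] using
      hR.integral_indicator_stepSet (n := n) (j := j) stronglyMeasurable_one (integrable_const 1)
  have hunion : μ.real (⋃ j, stepSet R n j) = 1 := by
    rw [measureReal_iUnion_fintype (pairwise_disjoint_stepSet n) hS]
    simp_rw [hprob]
    rw [← integral_finsetSum _ fun j _ => by
        simpa using hR.integrable_mul_div (n := n) (j := j) stronglyMeasurable_one
          (integrable_const 1),
      integral_congr_ae (g := fun _ => (1 : ℝ)) ?_, integral_const, probReal_univ, smul_eq_mul,
      mul_one]
    filter_upwards [hsum] with ω hω
    rw [← Finset.sum_div, hω, div_self (by positivity)]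
  have hfull : μ (⋃ j, stepSet R n j) = μ Set.univ := by
    rw [measure_univ]; exact (ENNReal.toReal_eq_one_iff _).1 hunion
  simpa using (ae_mem_iff_measure_eq (MeasurableSet.iUnion hS).nullMeasurableSet).2 hfull

lemma IsCyclicUrn.ae_sum_eq_s9 (hR : IsCyclicUrn μ m j0 R) (n : ℕ) :
    ∀ᵐ ω ∂μ, ∑ i, R n ω i = n + 1 := by
  induction n with
  | zero => exact .of_forall fun ω => by simp [hR.init ω]
  | succ n ih =>
    filter_upwards [ih, hR.ae_exists_mem_stepSet_of_ae_sum ih] with ω hsum ⟨j, hj⟩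
    simp only [show R (n + 1) ω = _ from hj, Pi.add_apply, Finset.sum_add_distrib, hsum,
      sum_eSucc]
    push_cast; ring

lemma IsCyclicUrn.ae_exists_mem_stepSet (hR : IsCyclicUrn μ m j0 R) (n : ℕ) :
    ∀ᵐ ω ∂μ, ∃ j, ω ∈ stepSet R n j :=
  hR.ae_exists_mem_stepSet_of_ae_sum (hR.ae_sum_eq_s9 n)

lemma IsCyclicUrn.integral_comp_succ (hR : IsCyclicUrn μ m j0 R) (n : ℕ)
    {f : (Fin m → ℝ) → ℝ} (hf : Measurable f)
    (hfi : ∀ j, Integrable (fun ω => f (R n ω + eSucc m j)) μ) :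
    ∫ ω, f (R (n + 1) ω) ∂μ =
      ∫ ω, ∑ j, f (R n ω + eSucc m j) * (R n ω j / (n + 1)) ∂μ := by
  have hmeas : ∀ j, StronglyMeasurable[urnFilt m R n] fun ω => f (R n ω + eSucc m j) :=
    fun j => (hf.comp (measurable_urnFilt n |>.add_const _)).stronglyMeasurable
  have hdecomp : (fun ω => f (R (n + 1) ω)) =ᵐ[μ]
      fun ω => ∑ j, (stepSet R n j).indicator (fun ω => f (R n ω + eSucc m j)) ω := by
    filter_upwards [hR.ae_exists_mem_stepSet n] with ω ⟨j, hj⟩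
    rw [Finset.sum_eq_single_of_mem j (Finset.mem_univ j) fun j' _ hj' =>
      Set.indicator_of_notMem (Set.disjoint_left.1 (pairwise_disjoint_stepSet n hj'.symm) hj) _,
      Set.indicator_of_mem hj, show R (n + 1) ω = _ from hj]
  rw [integral_congr_ae hdecomp,
    integral_finsetSum _ fun j _ => (hfi j).indicator (measurableSet_stepSet hR.meas n j),
    integral_finsetSum _ fun j _ => hR.integrable_mul_div (hmeas j) (hfi j)]
  exact Finset.sum_congr rfl fun j _ => hR.integral_indicator_stepSet (hmeas j) (hfi j)

lemma IsCyclicUrn.ae_norm_ucoef_le (hR : IsCyclicUrn μ m j0 R) (k n : ℕ) :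
    ∀ᵐ ω ∂μ, ‖ucoef m k (R n ω)‖ ≤ n + 1 := by
  filter_upwards [hR.ae_sum_eq_s9 n] with ω hω
  refine (norm_ucoef_le k _).trans_eq ?_
  rw [← hω]
  refine Finset.sum_congr rfl fun i _ => abs_of_nonneg ?_
  obtain ⟨z, hz⟩ := hR.natVal n ω i
  exact hz ▸ z.cast_nonneg

lemma IsCyclicUrn.integrable_norm_sq_ucoef_add (hR : IsCyclicUrn μ m j0 R) (k n : ℕ)
    (v : Fin m → ℝ) : Integrable (fun ω => ‖ucoef m k (R n ω + v)‖ ^ 2) μ := by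
  have := hR.isProb
  refine .of_bound (((continuous_ucoef k).norm.pow 2).measurable.comp
    ((hR.meas n).add_const v)).aestronglyMeasurable ((n + 1 + ‖ucoef m k v‖) ^ 2) ?_
  filter_upwards [hR.ae_norm_ucoef_le k n] with ω hω
  rw [norm_pow, norm_norm, ucoef_add]
  gcongr
  exact (norm_add_le _ _).trans (by gcongr)

lemma IsCyclicUrn.integral_norm_sq_ucoef_zero (hR : IsCyclicUrn μ m j0 R) (k : ℕ) :
    ∫ ω, ‖ucoef m k (R 0 ω)‖ ^ 2 ∂μ = 1 := by
  have := hR.isProb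
  simp [hR.init, ucoef_indicator, norm_cw]

lemma IsCyclicUrn.integral_norm_sq_ucoef_succ (hR : IsCyclicUrn μ m j0 R) (k n : ℕ) :
    ∫ ω, ‖ucoef m k (R (n + 1) ω)‖ ^ 2 ∂μ =
      (1 + 2 * (cw m ^ k).re / (n + 1)) * ∫ ω, ‖ucoef m k (R n ω)‖ ^ 2 ∂μ + 1 := by
  have := hR.isProb
  have hX : Integrable (fun ω => ‖ucoef m k (R n ω)‖ ^ 2) μ := by
    simpa using hR.integrable_norm_sq_ucoef_add k n 0
  rw [hR.integral_comp_succ n (f := fun w => ‖ucoef m k w‖ ^ 2)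
    ((continuous_ucoef k).norm.pow 2).measurable
    fun j => hR.integrable_norm_sq_ucoef_add k n _,
    integral_congr_ae
      (g := fun ω => (1 + 2 * (cw m ^ k).re / (n + 1)) * ‖ucoef m k (R n ω)‖ ^ 2 + 1) ?_,
    integral_add (hX.const_mul _) (integrable_const 1), integral_const_mul, integral_const,
    probReal_univ, smul_eq_mul, mul_one]
  filter_upwards [hR.ae_sum_eq_s9 n] with ω hω
  have key := sum_mul_norm_sq_ucoef_add_eSucc k (R n ω)
  rw [hω] at key
  calc ∑ j, ‖ucoef m k (R n ω + eSucc m j)‖ ^ 2 * (R n ω j / (n + 1))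
      = (∑ j, R n ω j * ‖ucoef m k (R n ω + eSucc m j)‖ ^ 2) / (n + 1) := by
        rw [Finset.sum_div]; exact Finset.sum_congr rfl fun j _ => by ring
    _ = _ := by rw [key]; field_simp; ring

end Urn

theorem stmt9 {Ω : Type*} [MeasurableSpace Ω] (μ : Measure Ω) (m : ℕ) (hm : 2 ≤ m)
    (hme : 3 ∣ m) (R : ℕ → Ω → Fin m → ℝ) (hR : IsCyclicUrn μ m ⟨0, by omega⟩ R)
    (n : ℕ) (hn : 1 ≤ n) :
    ∫ ω, (‖ucoef m (m / 3) (R n ω)‖) ^ 2 ∂μ = ((n : ℝ) + 1) / 2 := by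
  have hre := re_cw_pow_div_three (by omega) hme
  induction n, hn using Nat.le_induction with
  | base => rw [hR.integral_norm_sq_ucoef_succ, hR.integral_norm_sq_ucoef_zero, hre]; norm_num
  | succ n _ ih =>
    rw [hR.integral_norm_sq_ucoef_succ, ih, hre]
    push_cast
    field_simp
    ring

end
end
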